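/- For every n ≥ 0, ε > 0, σ > 0 and u ∈ ℝ: ∫_ℝ p_ε(σ v - u) H_n(v) p_1(v) dv = (σ/√(σ²+ε))^n H_n(u/√(σ²+ε)) p_{σ²+ε}(u), where H_n is the n-th (probabilists') Hermite polynomial H_n(x) = (-1)^n e^{x²/2} (d/dx)^n e^{-x²/2} and p_s(x) = (2πs)^{-1/2} e^{-x²/(2s)}. -/

import Mathlib

open MeasureTheory

/-- The Gaussian heat kernel `p_s(x) = (2πs)^{-1/2} exp(-x²/(2s))`. -/
noncomputable def heatK (s x : ℝ) : ℝ :=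
  (Real.sqrt (2 * Real.pi * s))⁻¹ * Real.exp (-x ^ 2 / (2 * s))

/-!
Completing the square gives `p_ε(σv - u) p_1(v) = p_{σ²+ε}(u) p_s(v - m)` with `s = ε/(σ²+ε)` and
`m = σu/(σ²+ε)`, so the integral is `p_{σ²+ε}(u) E[H_n(X)]` for `X ~ N(m, s)`. Stein's identity
`E[(X - m) Q(X)] = s E[Q'(X)]`, applied to the recurrence `H_{n+2} = X H_{n+1} - (n+1) H_n`, gives
`E[H_{n+2}(X)] = m E[H_{n+1}(X)] - (1 - s)(n+1) E[H_n(X)]`; with `c = √(1 - s)` the sequence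
`c^n H_n(m/c)` satisfies the same recurrence and has the same first two terms.
-/

open ProbabilityTheory Polynomial Real
open scoped NNReal

section GaussianPolynomial

variable {R : Type*} [CommSemiring R] [Algebra R ℝ] (m : ℝ) (v : ℝ≥0)

lemma hasDerivAt_gaussianPDFReal (x : ℝ) :
    HasDerivAt (gaussianPDFReal m v) (-((x - m) / v) * gaussianPDFReal m v x) x := by
  have hg : HasDerivAt (fun y ↦ -(y - m) ^ 2 / (2 * v)) (-(2 * (x - m)) / (2 * v)) x := by
    simpa using ((((hasDerivAt_id x).sub_const m).pow 2).fun_neg).div_const (2 * (v : ℝ))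
  rw [gaussianPDFReal_def]
  refine (hg.exp.const_mul _).congr_deriv ?_
  beta_reduce
  ring

lemma integrable_aeval_gaussianReal (Q : R[X]) :
    Integrable (fun x ↦ aeval x Q) (gaussianReal m v) := by
  simp_rw [aeval_eq_sum_range, Algebra.smul_def]
  refine integrable_finsetSum _ fun i _ ↦ Integrable.const_mul ?_ _
  exact integrable_pow_of_mem_interior_integrableExpSet (by simp) i

lemma integrable_aeval_mul_gaussianPDFReal (Q : R[X]) :
    Integrable (fun x ↦ aeval x Q * gaussianPDFReal m v x) := by
  rcases eq_or_ne v 0 with rfl | hv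
  · simp [gaussianPDFReal_zero_var]
  · have h := integrable_aeval_gaussianReal m v Q
    rw [gaussianReal_of_var_ne_zero _ hv, integrable_withDensity_iff_integrable_smul'
      (measurable_gaussianPDF m v) (ae_of_all _ fun _ ↦ gaussianPDF_lt_top)] at h
    simpa [mul_comm] using h

lemma integrable_sub_mul_aeval_gaussianReal (Q : R[X]) :
    Integrable (fun x ↦ (x - m) * aeval x Q) (gaussianReal m v) := by
  refine ((integrable_aeval_gaussianReal m v (X * Q)).sub
    ((integrable_aeval_gaussianReal m v Q).const_mul m)).congr (ae_of_all _ fun x ↦ ?_)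
  simp only [Pi.sub_apply, map_mul, aeval_X]
  ring

lemma integrable_sub_mul_aeval_mul_gaussianPDFReal (Q : R[X]) :
    Integrable (fun x ↦ (x - m) * aeval x Q * gaussianPDFReal m v x) := by
  refine ((integrable_aeval_mul_gaussianPDFReal m v (X * Q)).sub
    ((integrable_aeval_mul_gaussianPDFReal m v Q).const_mul m)).congr (ae_of_all _ fun x ↦ ?_)
  simp only [Pi.sub_apply, map_mul, aeval_X]
  ring

theorem integral_sub_mul_aeval_gaussianReal (Q : R[X]) :
    ∫ x, (x - m) * aeval x Q ∂gaussianReal m v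
      = v * ∫ x, aeval x (derivative Q) ∂gaussianReal m v := by
  rcases eq_or_ne v 0 with rfl | hv
  · simp [gaussianReal_zero_var]
  have hv' : (v : ℝ) ≠ 0 := by exact_mod_cast hv
  have hibp := integral_mul_deriv_eq_deriv_mul_of_integrable
    (fun x _ ↦ Q.hasDerivAt_aeval x) (fun x _ ↦ hasDerivAt_gaussianPDFReal m v x)
    (((integrable_sub_mul_aeval_mul_gaussianPDFReal m v Q).const_mul (-(v : ℝ)⁻¹)).congr
      (ae_of_all _ fun x ↦ by simp only [Pi.mul_apply]; ring))
    (integrable_aeval_mul_gaussianPDFReal m v _) (integrable_aeval_mul_gaussianPDFReal m v Q)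
  rw [integral_gaussianReal_eq_integral_smul hv, integral_gaussianReal_eq_integral_smul hv]
  calc ∫ x, gaussianPDFReal m v x • ((x - m) * aeval x Q)
      = ∫ x, -(v : ℝ) * (aeval x Q * (-((x - m) / v) * gaussianPDFReal m v x)) := by
        refine integral_congr_ae (ae_of_all _ fun x ↦ ?_)
        simp only [smul_eq_mul]
        field_simp
    _ = v * ∫ x, gaussianPDFReal m v x • aeval x (derivative Q) := by
        simp only [integral_const_mul, hibp, neg_mul_neg, smul_eq_mul,
          mul_comm (gaussianPDFReal m v _)]

end GaussianPolynomial

namespace Polynomial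

lemma derivative_hermite_succ (n : ℕ) : derivative (hermite (n + 1)) = (n + 1) * hermite n := by
  induction n with
  | zero => simp
  | succ n ih =>
    rw [hermite_succ (n + 1), derivative_sub, derivative_mul, derivative_X, ih, derivative_mul,
      hermite_succ n]
    simp only [derivative_add, derivative_natCast, derivative_one]
    push_cast
    ring

lemma hermite_add_two (n : ℕ) :
    hermite (n + 2) = X * hermite (n + 1) - (n + 1 : ℤ[X]) * hermite n := by
  rw [hermite_succ (n + 1), derivative_hermite_succ]

end Polynomial

lemma integral_aeval_hermite_add_two_gaussianReal (m : ℝ) (v : ℝ≥0) (n : ℕ) :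
    ∫ x, aeval x (hermite (n + 2)) ∂gaussianReal m v
      = m * ∫ x, aeval x (hermite (n + 1)) ∂gaussianReal m v
        - (1 - v) * (n + 1) * ∫ x, aeval x (hermite n) ∂gaussianReal m v := by
  have hsplit : ∀ x : ℝ, aeval x (hermite (n + 2)) = (x - m) * aeval x (hermite (n + 1))
      + m * aeval x (hermite (n + 1)) - (n + 1) * aeval x (hermite n) := by
    intro x
    simp only [hermite_add_two, map_sub, map_mul, aeval_X, map_add, map_natCast, map_one]
    ring
  have hA := integrable_sub_mul_aeval_gaussianReal m v (hermite (n + 1))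
  have hB := (integrable_aeval_gaussianReal m v (hermite (n + 1))).const_mul m
  have hC := (integrable_aeval_gaussianReal m v (hermite n)).const_mul ((n : ℝ) + 1)
  simp_rw [hsplit]
  rw [integral_sub (hA.fun_add hB) hC, integral_add hA hB, integral_const_mul, integral_const_mul,
    integral_sub_mul_aeval_gaussianReal, derivative_hermite_succ]
  simp only [map_mul, map_add, map_natCast, map_one, integral_const_mul]
  ring

theorem integral_aeval_hermite_gaussianReal (m : ℝ) {v : ℝ≥0} (hv : v < 1) (n : ℕ) :
    ∫ x, aeval x (hermite n) ∂gaussianReal m v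
      = √(1 - v) ^ n * aeval (m / √(1 - v)) (hermite n) := by
  set c := √(1 - (v : ℝ))
  have hc : c ≠ 0 := (Real.sqrt_pos.2 (sub_pos.2 (by exact_mod_cast hv))).ne'
  have hc2 : c ^ 2 = 1 - v := Real.sq_sqrt (sub_nonneg.2 (by exact_mod_cast hv.le))
  induction n using Nat.twoStepInduction with
  | zero => simp
  | one =>
    simp only [hermite_one, aeval_X, integral_id_gaussianReal, pow_one]
    field_simp
  | more n ih0 ih1 =>
    rw [integral_aeval_hermite_add_two_gaussianReal, ih0, ih1, hermite_add_two]
    simp only [map_sub, map_mul, aeval_X, map_add, map_natCast, map_one]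
    rw [← hc2]
    field_simp
    ring

lemma integral_mul_heatK_sub (f : ℝ → ℝ) (m : ℝ) {v : ℝ≥0} (hv : v ≠ 0) :
    ∫ x, f x * heatK v (x - m) = ∫ x, f x ∂gaussianReal m v := by
  rw [integral_gaussianReal_eq_integral_smul hv]
  simp only [smul_eq_mul, mul_comm (gaussianPDFReal _ _ _)]
  rfl

lemma heatK_mul_heatK {ε t : ℝ} (hε : 0 < ε) (ht : 0 < t) (σ u v : ℝ) :
    heatK ε (σ * v - u) * heatK t v
      = heatK (σ ^ 2 * t + ε) u *
          heatK (ε * t / (σ ^ 2 * t + ε)) (v - σ * t * u / (σ ^ 2 * t + ε)) := by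
  have hT : 0 < σ ^ 2 * t + ε := by positivity
  unfold heatK
  rw [mul_mul_mul_comm, mul_mul_mul_comm (√(2 * π * (σ ^ 2 * t + ε)))⁻¹, ← mul_inv, ← mul_inv,
    ← Real.sqrt_mul (by positivity), ← Real.sqrt_mul (by positivity), ← Real.exp_add,
    ← Real.exp_add]
  congr 1
  · congr 2
    field_simp
  · congr 1
    field_simp
    ring

/-- `∫ p_ε(σv - u) H_n(v) p_1(v) dv = (σ/√(σ²+ε))^n H_n(u/√(σ²+ε)) p_{σ²+ε}(u)`,
where `H_n` is the probabilists' Hermite polynomial. -/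
theorem stmt7 (n : ℕ) (ε σ u : ℝ) (hε : 0 < ε) (hσ : 0 < σ) :
    ∫ v : ℝ, heatK ε (σ * v - u) * Polynomial.aeval v (Polynomial.hermite n) * heatK 1 v
      = (σ / Real.sqrt (σ ^ 2 + ε)) ^ n *
          Polynomial.aeval (u / Real.sqrt (σ ^ 2 + ε)) (Polynomial.hermite n) *
          heatK (σ ^ 2 + ε) u := by
  have hT : 0 < σ ^ 2 + ε := by positivity
  let s : ℝ≥0 := ⟨ε / (σ ^ 2 + ε), by positivity⟩
  have hs : (s : ℝ) = ε / (σ ^ 2 + ε) := rfl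
  have hs0 : s ≠ 0 := by
    rw [← NNReal.coe_ne_zero, hs]
    positivity
  have hs1 : s < 1 := by
    rw [← NNReal.coe_lt_coe, hs, NNReal.coe_one, div_lt_one hT]
    nlinarith
  have hc : √(1 - s) = σ / √(σ ^ 2 + ε) := by
    rw [hs, show 1 - ε / (σ ^ 2 + ε) = σ ^ 2 / (σ ^ 2 + ε) by field_simp; ring,
      Real.sqrt_div (sq_nonneg σ), Real.sqrt_sq hσ.le]
  have hm : σ * u / (σ ^ 2 + ε) / (σ / √(σ ^ 2 + ε)) = u / √(σ ^ 2 + ε) := by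
    have hT' : √(σ ^ 2 + ε) ^ 2 = σ ^ 2 + ε := Real.sq_sqrt hT.le
    field_simp
    rw [hT']
  calc _ = heatK (σ ^ 2 + ε) u *
          ∫ v, aeval v (hermite n) * heatK s (v - σ * u / (σ ^ 2 + ε)) := by
        rw [← integral_const_mul]
        congr with v
        rw [mul_right_comm, heatK_mul_heatK hε one_pos, hs]
        simp only [mul_one]
        ring
    _ = _ := by
        rw [integral_mul_heatK_sub _ _ hs0, integral_aeval_hermite_gaussianReal _ hs1, hc, hm]
        ring
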